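/- arXiv:1911.03357 — 3 statements merged into one kernel-verified Lean document; each statement's English description precedes it below -/
import Mathlib

section
/- Every multiplicative seminorm |·| on ℂ bounded by the hybrid norm (i.e. |0| = 0, |1| = 1, |zw| = |z|·|w|, |z + w| ≤ |z| + |w|, and |z| ≤ ‖z‖_hyb for all z, w ∈ ℂ) is of the form |z| = |z|_∞^λ for z ≠ 0, for a unique λ ∈ [0,1], where |z|_∞ denotes the usual complex modulus and λ = 0 corresponds to the trivial absolute value (equal to 1 on all nonzero z). In other words, the Berkovich spectrum of the Banach ring ℂ^hyb is in bijection with the interval [0,1] via λ ↦ |·|_∞^λ. -/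
/-- The hybrid norm on `ℂ`: `‖z‖_hyb = max {1, |z|}` for `z ≠ 0`, and `‖0‖_hyb = 0`. -/
noncomputable def hybNorm (z : ℂ) : ℝ := if z = 0 then 0 else max 1 ‖z‖

/-!
Applying the bound `φ ≤ max 1 ‖·‖` to `z` and `z⁻¹` and using `φ z * φ z⁻¹ = 1` gives
`φ u = 1` for `‖u‖ = 1` and `1 ≤ φ r ≤ r` for reals `r ≥ 1`. Writing `z = ‖z‖ • (z / ‖z‖)`,
`φ` is determined by its values on positive reals, where `t ↦ log φ(eᵗ)` is additive and
satisfies `|log φ(eᵗ)| ≤ |t|`; it is therefore continuous, hence `ℝ`-linear, `t ↦ λ t` with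
`λ ∈ [0, 1]`. Evaluating at `z = 2` shows that `λ` is unique.
-/

open Real

theorem AddMonoidHom.map_real_eq_mul_map_one_of_abs_le (g : ℝ →+ ℝ) {C : ℝ}
    (hg : ∀ t, |g t| ≤ C * |t|) (t : ℝ) : g t = t * g 1 := by
  have hcont : Continuous g := AddMonoidHomClass.continuous_of_bound g C hg
  simpa using map_real_smul g hcont t 1

namespace MonoidHom

section NormedField

variable {K : Type*} [NormedField K] {φ : K →* ℝ}

theorem map_mul_map_inv (φ : K →* ℝ) {z : K} (hz : z ≠ 0) : φ z * φ z⁻¹ = 1 := by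
  rw [← map_mul, mul_inv_cancel₀ hz, map_one]

theorem map_ne_zero_of_ne_zero (φ : K →* ℝ) {z : K} (hz : z ≠ 0) : φ z ≠ 0 :=
  left_ne_zero_of_mul_eq_one (φ.map_mul_map_inv hz)

theorem pos_of_ne_zero (hφ : ∀ z, 0 ≤ φ z) {z : K} (hz : z ≠ 0) : 0 < φ z :=
  (hφ z).lt_of_ne (φ.map_ne_zero_of_ne_zero hz).symm

theorem le_one_of_norm_le_one (hbdd : ∀ z ≠ 0, φ z ≤ max 1 ‖z‖) {z : K} (hz : z ≠ 0)
    (h : ‖z‖ ≤ 1) : φ z ≤ 1 :=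
  (hbdd z hz).trans_eq (max_eq_left h)

theorem le_norm_of_one_le_norm (hbdd : ∀ z ≠ 0, φ z ≤ max 1 ‖z‖) {z : K} (h : 1 ≤ ‖z‖) :
    φ z ≤ ‖z‖ :=
  (hbdd z (norm_pos_iff.1 (one_pos.trans_le h))).trans_eq (max_eq_right h)

theorem one_le_of_one_le_norm (hφ : ∀ z, 0 ≤ φ z) (hbdd : ∀ z ≠ 0, φ z ≤ max 1 ‖z‖) {z : K}
    (h : 1 ≤ ‖z‖) : 1 ≤ φ z := by
  have hz : z ≠ 0 := norm_pos_iff.1 (one_pos.trans_le h)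
  have hinv : φ z⁻¹ ≤ 1 :=
    le_one_of_norm_le_one hbdd (inv_ne_zero hz) (by simpa using inv_le_one_of_one_le₀ h)
  nlinarith [φ.map_mul_map_inv hz, hφ z, hφ z⁻¹]

theorem eq_one_of_norm_eq_one (hφ : ∀ z, 0 ≤ φ z) (hbdd : ∀ z ≠ 0, φ z ≤ max 1 ‖z‖) {z : K}
    (h : ‖z‖ = 1) : φ z = 1 :=
  le_antisymm (le_one_of_norm_le_one hbdd (norm_ne_zero_iff.1 (by simp [h])) h.le)
    (one_le_of_one_le_norm hφ hbdd h.ge)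

end NormedField

section RCLike

variable {𝕜 : Type*} [RCLike 𝕜] {φ : 𝕜 →* ℝ}

theorem map_eq_map_norm (hφ : ∀ z, 0 ≤ φ z) (hbdd : ∀ z ≠ 0, φ z ≤ max 1 ‖z‖) {z : 𝕜}
    (hz : z ≠ 0) : φ z = φ (‖z‖ : 𝕜) := by
  have hnorm : (‖z‖ : 𝕜) ≠ 0 := by simpa using hz
  have hunit : ‖z / ‖z‖‖ = 1 := by simp [norm_div, hz]
  rw [← mul_div_cancel₀ z hnorm, map_mul, eq_one_of_norm_eq_one hφ hbdd hunit, mul_one,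
    mul_div_cancel₀ z hnorm]

noncomputable def logExp (φ : 𝕜 →* ℝ) : ℝ →+ ℝ where
  toFun t := log (φ (exp t : 𝕜))
  map_zero' := by simp
  map_add' s t := by
    rw [exp_add, RCLike.ofReal_mul, map_mul,
      log_mul (φ.map_ne_zero_of_ne_zero (by simp [exp_ne_zero]))
        (φ.map_ne_zero_of_ne_zero (by simp [exp_ne_zero]))]

theorem logExp_apply (t : ℝ) : logExp φ t = log (φ (exp t : 𝕜)) := rfl

theorem norm_ofReal_exp (t : ℝ) : ‖(exp t : 𝕜)‖ = exp t := by
  rw [RCLike.norm_ofReal, abs_of_pos (exp_pos t)]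

theorem one_le_norm_ofReal_exp {t : ℝ} (ht : 0 ≤ t) : 1 ≤ ‖(exp t : 𝕜)‖ :=
  (norm_ofReal_exp (𝕜 := 𝕜) t).symm ▸ one_le_exp ht

theorem logExp_nonneg (hφ : ∀ z, 0 ≤ φ z) (hbdd : ∀ z ≠ 0, φ z ≤ max 1 ‖z‖) {t : ℝ}
    (ht : 0 ≤ t) : 0 ≤ logExp φ t :=
  log_nonneg (one_le_of_one_le_norm hφ hbdd (one_le_norm_ofReal_exp ht))

theorem logExp_le (hφ : ∀ z, 0 ≤ φ z) (hbdd : ∀ z ≠ 0, φ z ≤ max 1 ‖z‖) {t : ℝ}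
    (ht : 0 ≤ t) : logExp φ t ≤ t := by
  calc logExp φ t ≤ log (exp t) :=
        log_le_log (pos_of_ne_zero hφ (by simp [exp_ne_zero]))
          ((le_norm_of_one_le_norm hbdd (one_le_norm_ofReal_exp ht)).trans_eq (norm_ofReal_exp t))
    _ = t := log_exp t

theorem abs_logExp_le (hφ : ∀ z, 0 ≤ φ z) (hbdd : ∀ z ≠ 0, φ z ≤ max 1 ‖z‖) (t : ℝ) :
    |logExp φ t| ≤ |t| := by
  rcases le_total 0 t with ht | ht
  · rw [abs_of_nonneg (logExp_nonneg hφ hbdd ht), abs_of_nonneg ht]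
    exact logExp_le hφ hbdd ht
  · have hneg := logExp_le hφ hbdd (neg_nonneg.2 ht)
    rw [_root_.map_neg] at hneg
    rw [abs_of_nonpos ht, abs_of_nonpos (by simpa using logExp_nonneg hφ hbdd (neg_nonneg.2 ht))]
    linarith

theorem map_eq_norm_rpow (hφ : ∀ z, 0 ≤ φ z) (hbdd : ∀ z ≠ 0, φ z ≤ max 1 ‖z‖) {z : 𝕜}
    (hz : z ≠ 0) : φ z = ‖z‖ ^ logExp φ 1 := by
  have hnorm : 0 < ‖z‖ := norm_pos_iff.2 hz
  have hlin := (logExp φ).map_real_eq_mul_map_one_of_abs_le (C := 1)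
    (by simpa using abs_logExp_le hφ hbdd) (log ‖z‖)
  rw [logExp_apply, exp_log hnorm, ← map_eq_map_norm hφ hbdd hz] at hlin
  rw [rpow_def_of_pos hnorm, ← hlin, exp_log (pos_of_ne_zero hφ hz)]

end RCLike

end MonoidHom

theorem berkovich_spectrum_hybrid_complex_general (φ : ℂ → ℝ) (hnonneg : ∀ z : ℂ, 0 ≤ φ z)
    (h1 : φ 1 = 1)
    (hmul : ∀ z w : ℂ, φ (z * w) = φ z * φ w)
    (hbdd : ∀ z : ℂ, φ z ≤ hybNorm z) :
    ∃! l : ℝ, l ∈ Set.Icc (0 : ℝ) 1 ∧ ∀ z : ℂ, z ≠ 0 → φ z = ‖z‖ ^ l := by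
  let ψ : ℂ →* ℝ := ⟨⟨φ, h1⟩, hmul⟩
  have hψ : ∀ z ≠ 0, ψ z ≤ max 1 ‖z‖ := fun z hz ↦ (hbdd z).trans_eq (if_neg hz)
  have hexp : ∀ z : ℂ, z ≠ 0 → φ z = ‖z‖ ^ ψ.logExp 1 :=
    fun z hz ↦ MonoidHom.map_eq_norm_rpow hnonneg hψ hz
  refine ⟨ψ.logExp 1, ⟨?_, hexp⟩, fun l ⟨_, hl⟩ ↦ ?_⟩
  · exact ⟨MonoidHom.logExp_nonneg hnonneg hψ zero_le_one,
      MonoidHom.logExp_le hnonneg hψ zero_le_one⟩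
  · have h2 : ‖(2 : ℂ)‖ ^ l = ‖(2 : ℂ)‖ ^ ψ.logExp 1 := by
      rw [← hl 2 two_ne_zero, hexp 2 two_ne_zero]
    rw [Complex.norm_two] at h2
    exact (rpow_right_inj two_pos (by norm_num)).1 h2

/-- Every multiplicative seminorm on `ℂ` bounded by the hybrid norm is of the form
`|z| = |z|_∞ ^ λ` for `z ≠ 0`, for a unique `λ ∈ [0,1]` (with `λ = 0` corresponding to the
trivial absolute value).  In other words, the Berkovich spectrum `M(ℂ^hyb)` is in bijection
with `[0,1]` via `λ ↦ |·|_∞^λ`. -/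
theorem berkovich_spectrum_hybrid_complex (φ : ℂ → ℝ) (hnonneg : ∀ z : ℂ, 0 ≤ φ z)
    (h0 : φ 0 = 0) (h1 : φ 1 = 1)
    (hmul : ∀ z w : ℂ, φ (z * w) = φ z * φ w)
    (hadd : ∀ z w : ℂ, φ (z + w) ≤ φ z + φ w)
    (hbdd : ∀ z : ℂ, φ z ≤ hybNorm z) :
    ∃! l : ℝ, l ∈ Set.Icc (0 : ℝ) 1 ∧ ∀ z : ℂ, z ≠ 0 → φ z = ‖z‖ ^ l :=
  berkovich_spectrum_hybrid_complex_general φ hnonneg h1 hmul hbdd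
end

section
/- A_r is a subring of ℂ((t)) and ‖·‖_r is a submultiplicative ring norm on it: if f, g ∈ A_r then f + g ∈ A_r and f·g ∈ A_r, with ‖f + g‖_r ≤ ‖f‖_r + ‖g‖_r and ‖f·g‖_r ≤ ‖f‖_r · ‖g‖_r; moreover ‖1‖_r = 1. -/
/-- `f ∈ A_r`:  a formal Laurent series `f = Σ aₙ tⁿ ∈ ℂ((t))` belongs to `A_r` when
`Σₙ ‖aₙ‖_hyb rⁿ < ∞`. -/
def memAr (r : ℝ) (f : LaurentSeries ℂ) : Prop :=
  Summable (fun n : ℤ => hybNorm (f.coeff n) * r ^ n)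

/-- The norm `‖f‖_r = Σₙ ‖aₙ‖_hyb rⁿ` on `A_r`. -/
noncomputable def normAr (r : ℝ) (f : LaurentSeries ℂ) : ℝ :=
  ∑' n : ℤ, hybNorm (f.coeff n) * r ^ n

/-! The hybrid norm is a ring seminorm on `ℂ`: subadditive and submultiplicative, though not
multiplicative. For any ring seminorm `p` and `r > 0`, the coefficient of `tⁿ` in `f * g` is a
finite sum over `i + j = n`, so its weight `p(·) rⁿ` is at most `Σ_{i+j=n} p(aᵢ) rⁱ · p(bⱼ) rʲ`.
For distinct `n` these are disjoint pieces of the double series `Σ_{i,j} p(aᵢ) rⁱ p(bⱼ) rʲ`,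
whose sum is `‖f‖_r ‖g‖_r`. -/

theorem hybNorm_zero : hybNorm 0 = 0 := if_pos rfl

theorem hybNorm_one : hybNorm 1 = 1 := by simp [hybNorm]

theorem hybNorm_of_ne_zero {z : ℂ} (hz : z ≠ 0) : hybNorm z = max 1 ‖z‖ := if_neg hz

theorem one_le_hybNorm {z : ℂ} (hz : z ≠ 0) : 1 ≤ hybNorm z :=
  (hybNorm_of_ne_zero hz).symm ▸ le_max_left _ _

theorem norm_le_hybNorm (z : ℂ) : ‖z‖ ≤ hybNorm z := by
  rcases eq_or_ne z 0 with rfl | hz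
  · simp [hybNorm]
  · exact (hybNorm_of_ne_zero hz).symm ▸ le_max_right _ _

theorem hybNorm_nonneg (z : ℂ) : 0 ≤ hybNorm z := (norm_nonneg z).trans (norm_le_hybNorm z)

theorem hybNorm_add_le (a b : ℂ) : hybNorm (a + b) ≤ hybNorm a + hybNorm b := by
  rcases eq_or_ne (a + b) 0 with hab | hab
  · rw [hab, hybNorm_zero]
    exact add_nonneg (hybNorm_nonneg a) (hybNorm_nonneg b)
  have h_one : 1 ≤ hybNorm a + hybNorm b := by
    rcases eq_or_ne a 0 with rfl | ha
    · rw [hybNorm_zero, zero_add]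
      exact one_le_hybNorm (by simpa using hab)
    · linarith [one_le_hybNorm ha, hybNorm_nonneg b]
  rw [hybNorm_of_ne_zero hab]
  exact max_le h_one <|
    (norm_add_le a b).trans (add_le_add (norm_le_hybNorm a) (norm_le_hybNorm b))

theorem hybNorm_mul_le (a b : ℂ) : hybNorm (a * b) ≤ hybNorm a * hybNorm b := by
  rcases eq_or_ne (a * b) 0 with hab | hab
  · rw [hab, hybNorm_zero]
    exact mul_nonneg (hybNorm_nonneg a) (hybNorm_nonneg b)
  obtain ⟨ha, hb⟩ := mul_ne_zero_iff.1 hab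
  rw [hybNorm_of_ne_zero hab, norm_mul]
  exact max_le (one_le_mul_of_one_le_of_one_le (one_le_hybNorm ha) (one_le_hybNorm hb)) <|
    mul_le_mul (norm_le_hybNorm a) (norm_le_hybNorm b) (norm_nonneg b) (hybNorm_nonneg a)

noncomputable def hybRingSeminorm : RingSeminorm ℂ where
  toFun := hybNorm
  map_zero' := hybNorm_zero
  add_le' := hybNorm_add_le
  neg' z := by simp [hybNorm]
  mul_le' := hybNorm_mul_le

namespace LaurentSeries

variable {R : Type*} [Ring R] (p : RingSeminorm R) (r : ℝ)

noncomputable def weightedCoeff (f : LaurentSeries R) (n : ℤ) : ℝ := p (f.coeff n) * r ^ n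

variable {p r}

theorem weightedCoeff_nonneg (hr : 0 ≤ r) (f : LaurentSeries R) (n : ℤ) :
    0 ≤ weightedCoeff p r f n :=
  mul_nonneg (apply_nonneg p _) (zpow_nonneg hr n)

theorem hasSum_weightedCoeff_one (hp : p 1 = 1) : HasSum (weightedCoeff p r 1) 1 := by
  convert hasSum_ite_eq (0 : ℤ) (1 : ℝ) with n
  by_cases hn : n = 0 <;> simp [weightedCoeff, HahnSeries.coeff_one, hn, hp]

theorem weightedCoeff_add_le (hr : 0 ≤ r) (f g : LaurentSeries R) (n : ℤ) :
    weightedCoeff p r (f + g) n ≤ weightedCoeff p r f n + weightedCoeff p r g n := by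
  rw [weightedCoeff, weightedCoeff, weightedCoeff, ← add_mul, HahnSeries.coeff_add]
  exact mul_le_mul_of_nonneg_right (map_add_le_add p _ _) (zpow_nonneg hr n)

theorem weightedCoeff_mul_le (hr : 0 < r) (f g : LaurentSeries R) (n : ℤ) :
    weightedCoeff p r (f * g) n ≤
      ∑ ij ∈ Finset.antidiagonal f.isPWO_support g.isPWO_support n,
        weightedCoeff p r f ij.1 * weightedCoeff p r g ij.2 := by
  have hsum : p ((f * g).coeff n) ≤
      ∑ ij ∈ Finset.antidiagonal f.isPWO_support g.isPWO_support n,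
        p (f.coeff ij.1) * p (g.coeff ij.2) := by
    rw [HahnSeries.coeff_mul]
    exact (Finset.le_sum_of_subadditive p (map_zero p).le (map_add_le_add p) _ _).trans
      (Finset.sum_le_sum fun ij _ => map_mul_le_mul p _ _)
  calc weightedCoeff p r (f * g) n
      ≤ (∑ ij ∈ Finset.antidiagonal f.isPWO_support g.isPWO_support n,
          p (f.coeff ij.1) * p (g.coeff ij.2)) * r ^ n :=
        mul_le_mul_of_nonneg_right hsum (zpow_nonneg hr.le n)
    _ = _ := by
        rw [Finset.sum_mul]
        refine Finset.sum_congr rfl fun ij hij => ?_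
        rw [← (Finset.mem_antidiagonal.1 hij).2.2, zpow_add₀ hr.ne', weightedCoeff, weightedCoeff]
        ring

variable {f g : LaurentSeries R}

theorem summable_weightedCoeff_add (hr : 0 ≤ r) (hf : Summable (weightedCoeff p r f))
    (hg : Summable (weightedCoeff p r g)) : Summable (weightedCoeff p r (f + g)) :=
  (hf.add hg).of_nonneg_of_le (weightedCoeff_nonneg hr _) (weightedCoeff_add_le hr f g)

theorem tsum_weightedCoeff_add_le (hr : 0 ≤ r) (hf : Summable (weightedCoeff p r f))
    (hg : Summable (weightedCoeff p r g)) :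
    ∑' n, weightedCoeff p r (f + g) n ≤
      ∑' n, weightedCoeff p r f n + ∑' n, weightedCoeff p r g n := by
  rw [← hf.tsum_add hg]
  exact Summable.tsum_le_tsum (weightedCoeff_add_le hr f g) (summable_weightedCoeff_add hr hf hg)
    (hf.add hg)

theorem sum_weightedCoeff_mul_le (hr : 0 < r) (hf : Summable (weightedCoeff p r f))
    (hg : Summable (weightedCoeff p r g)) (s : Finset ℤ) :
    ∑ n ∈ s, weightedCoeff p r (f * g) n ≤
      (∑' n, weightedCoeff p r f n) * ∑' n, weightedCoeff p r g n := by
  classical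
  set A := Finset.antidiagonal f.isPWO_support g.isPWO_support
  have hA : (s : Set ℤ).PairwiseDisjoint A := fun m _ n _ hmn =>
    Finset.disjoint_left.2 fun ij hm hn =>
      hmn <| (Finset.mem_antidiagonal.1 hm).2.2.symm.trans (Finset.mem_antidiagonal.1 hn).2.2
  have hprod : Summable fun ij : ℤ × ℤ => weightedCoeff p r f ij.1 * weightedCoeff p r g ij.2 :=
    hf.mul_of_nonneg hg (weightedCoeff_nonneg hr.le f) (weightedCoeff_nonneg hr.le g)
  calc ∑ n ∈ s, weightedCoeff p r (f * g) n
      ≤ ∑ n ∈ s, ∑ ij ∈ A n, weightedCoeff p r f ij.1 * weightedCoeff p r g ij.2 :=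
        Finset.sum_le_sum fun n _ => weightedCoeff_mul_le hr f g n
    _ = ∑ ij ∈ s.biUnion A, weightedCoeff p r f ij.1 * weightedCoeff p r g ij.2 :=
        (Finset.sum_biUnion hA).symm
    _ ≤ ∑' ij : ℤ × ℤ, weightedCoeff p r f ij.1 * weightedCoeff p r g ij.2 :=
        hprod.sum_le_tsum _ fun ij _ =>
          mul_nonneg (weightedCoeff_nonneg hr.le f _) (weightedCoeff_nonneg hr.le g _)
    _ = _ := (hf.tsum_mul_tsum hg hprod).symm

theorem summable_weightedCoeff_mul (hr : 0 < r) (hf : Summable (weightedCoeff p r f))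
    (hg : Summable (weightedCoeff p r g)) : Summable (weightedCoeff p r (f * g)) :=
  summable_of_sum_le (weightedCoeff_nonneg hr.le _) (sum_weightedCoeff_mul_le hr hf hg)

theorem tsum_weightedCoeff_mul_le (hr : 0 < r) (hf : Summable (weightedCoeff p r f))
    (hg : Summable (weightedCoeff p r g)) :
    ∑' n, weightedCoeff p r (f * g) n ≤
      (∑' n, weightedCoeff p r f n) * ∑' n, weightedCoeff p r g n :=
  Real.tsum_le_of_sum_le (weightedCoeff_nonneg hr.le _) (sum_weightedCoeff_mul_le hr hf hg)

end LaurentSeries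

open LaurentSeries

theorem memAr_iff_summable_weightedCoeff (r : ℝ) (f : LaurentSeries ℂ) :
    memAr r f ↔ Summable (weightedCoeff hybRingSeminorm r f) :=
  Iff.rfl

theorem normAr_eq_tsum_weightedCoeff (r : ℝ) (f : LaurentSeries ℂ) :
    normAr r f = ∑' n, weightedCoeff hybRingSeminorm r f n :=
  rfl

theorem Ar_subring_and_norm_general (r : ℝ) (hr0 : 0 < r) :
    (memAr r 1 ∧ normAr r 1 = 1) ∧
    ∀ f g : LaurentSeries ℂ, memAr r f → memAr r g →
      memAr r (f + g) ∧ memAr r (f * g) ∧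
      normAr r (f + g) ≤ normAr r f + normAr r g ∧
      normAr r (f * g) ≤ normAr r f * normAr r g := by
  simp only [memAr_iff_summable_weightedCoeff, normAr_eq_tsum_weightedCoeff]
  have hone : HasSum (weightedCoeff hybRingSeminorm r 1) 1 := hasSum_weightedCoeff_one hybNorm_one
  exact ⟨⟨hone.summable, hone.tsum_eq⟩, fun f g hf hg =>
    ⟨summable_weightedCoeff_add hr0.le hf hg, summable_weightedCoeff_mul hr0 hf hg,
      tsum_weightedCoeff_add_le hr0.le hf hg, tsum_weightedCoeff_mul_le hr0 hf hg⟩⟩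

/-- `A_r` is a subring of `ℂ((t))` and `‖·‖_r` is a submultiplicative ring norm on it:
it contains `1` with `‖1‖_r = 1`, and it is closed under addition and multiplication, with
`‖f + g‖_r ≤ ‖f‖_r + ‖g‖_r` and `‖f·g‖_r ≤ ‖f‖_r·‖g‖_r`. -/
theorem Ar_subring_and_norm (r : ℝ) (hr0 : 0 < r) (hr1 : r < 1) :
    (memAr r 1 ∧ normAr r 1 = 1) ∧
    ∀ f g : LaurentSeries ℂ, memAr r f → memAr r g →
      memAr r (f + g) ∧ memAr r (f * g) ∧
      normAr r (f + g) ≤ normAr r f + normAr r g ∧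
      normAr r (f * g) ≤ normAr r f * normAr r g :=
  Ar_subring_and_norm_general r hr0
end

section
/- The map z ↦ |·|_z from the closed disk {z ∈ ℂ : |z| ≤ r} to functions on A_r is injective: if z, z′ ∈ ℂ with |z| ≤ r, |z′| ≤ r and z ≠ z′, then there exists f ∈ A_r with |f|_z ≠ |f|_{z′}. -/
open scoped Classical

/-- The evaluation `ev_z(f) = f(z) = Σₙ aₙ zⁿ` of a formal Laurent series at `z ≠ 0`. -/
noncomputable def evalAr (z : ℂ) (f : LaurentSeries ℂ) : ℂ :=
  ∑' n : ℤ, f.coeff n * z ^ n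

/-- The seminorm `|·|_z` on `A_r` for `z` in the closed disk of radius `r`:
`|f|_z = |f(z)| ^ (log r / log |z|)` for `0 < |z| ≤ r`, and
`|f|₀ = r^(ord₀ f)` for `f ≠ 0 `, `|0|₀ = 0` at `z = 0`. -/
noncomputable def seminormAt (r : ℝ) (z : ℂ) (f : LaurentSeries ℂ) : ℝ :=
  if z = 0 then (if f = 0 then 0 else r ^ (HahnSeries.order f))
  else (‖evalAr z f‖) ^ (Real.log r / Real.log ‖z‖)

/-!
The points of the disk are separated by the linear series `t - c`: for `c ≠ 0` it vanishes
at `c`, so `|t - c|_c = 0`, while `|t - c|_z > 0` for every `z ≠ c` (at `z = 0` because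
`|·|_0` is positive on nonzero series, elsewhere because `z - c ≠ 0`). Of two distinct points
at least one is nonzero and can play the role of `c`.
-/

section FiniteSupport

variable {f : LaurentSeries ℂ}

lemma memAr_of_support_finite (r : ℝ) (hf : f.support.Finite) : memAr r f :=
  summable_of_ne_finset_zero (s := hf.toFinset) fun n hn => by
    rw [Set.Finite.mem_toFinset, HahnSeries.mem_support, not_not] at hn
    simp [hn, hybNorm]

lemma evalAr_eq_sum {s : Finset ℤ} (hs : f.support ⊆ s) (z : ℂ) :
    evalAr z f = ∑ n ∈ s, f.coeff n * z ^ n :=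
  tsum_eq_sum fun n hn => by
    rw [not_not.mp (mt (HahnSeries.mem_support f n).mpr fun h => hn (hs h)), zero_mul]

end FiniteSupport

section SeminormAt

variable {r : ℝ} {z : ℂ} {f : LaurentSeries ℂ}

lemma seminormAt_zero_pos (hr : 0 < r) (hf : f ≠ 0) : 0 < seminormAt r 0 f := by
  rw [seminormAt, if_pos rfl, if_neg hf]
  exact zpow_pos hr _

lemma seminormAt_pos_of_evalAr_ne_zero (hz : z ≠ 0) (hf : evalAr z f ≠ 0) :
    0 < seminormAt r z f := by
  rw [seminormAt, if_neg hz]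
  exact Real.rpow_pos_of_pos (norm_pos_iff.mpr hf) _

lemma seminormAt_eq_zero_of_evalAr_eq_zero (hr0 : 0 < r) (hr1 : r ≠ 1) (hz0 : z ≠ 0)
    (hz1 : ‖z‖ ≠ 1) (hf : evalAr z f = 0) : seminormAt r z f = 0 := by
  have hlog_r : Real.log r ≠ 0 := Real.log_ne_zero_of_pos_of_ne_one hr0 hr1
  have hlog_z : Real.log ‖z‖ ≠ 0 := Real.log_ne_zero_of_pos_of_ne_one (norm_pos_iff.mpr hz0) hz1
  rw [seminormAt, if_neg hz0, hf, norm_zero, Real.zero_rpow (div_ne_zero hlog_r hlog_z)]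

end SeminormAt

section LinearFactor

/-- The series `t - c`. -/
noncomputable def linearFactor (c : ℂ) : LaurentSeries ℂ :=
  HahnSeries.single 1 1 - HahnSeries.single 0 c

variable {c : ℂ}

lemma coeff_linearFactor (n : ℤ) :
    (linearFactor c).coeff n = (if n = 1 then 1 else 0) - (if n = 0 then c else 0) := by
  simp only [linearFactor, HahnSeries.coeff_sub, HahnSeries.coeff_single]
  congr

lemma support_linearFactor_subset : (linearFactor c).support ⊆ ({0, 1} : Finset ℤ) := by
  intro n hn
  rw [HahnSeries.mem_support, coeff_linearFactor] at hn
  simp only [Finset.coe_insert, Finset.coe_singleton, Set.mem_insert_iff, Set.mem_singleton_iff]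
  by_contra! h
  simp [h.1, h.2] at hn

lemma linearFactor_ne_zero : linearFactor c ≠ 0 := fun h => by
  simpa [coeff_linearFactor] using congrArg (HahnSeries.coeff · 1) h

lemma memAr_linearFactor (r : ℝ) : memAr r (linearFactor c) :=
  memAr_of_support_finite r ((Finset.finite_toSet _).subset support_linearFactor_subset)

lemma evalAr_linearFactor (z : ℂ) : evalAr z (linearFactor c) = z - c := by
  rw [evalAr_eq_sum support_linearFactor_subset, Finset.sum_pair zero_ne_one,
    coeff_linearFactor, coeff_linearFactor]
  simp only [zero_ne_one, one_ne_zero, if_true, if_false, zpow_zero, zpow_one]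
  ring

lemma seminormAt_linearFactor_pos {r : ℝ} (hr : 0 < r) {z : ℂ} (hzc : z ≠ c) :
    0 < seminormAt r z (linearFactor c) := by
  rcases eq_or_ne z 0 with rfl | hz
  · exact seminormAt_zero_pos hr linearFactor_ne_zero
  · exact seminormAt_pos_of_evalAr_ne_zero hz (by rwa [evalAr_linearFactor, sub_ne_zero])

lemma seminormAt_linearFactor_self {r : ℝ} (hr0 : 0 < r) (hr1 : r ≠ 1) (hc0 : c ≠ 0)
    (hc1 : ‖c‖ ≠ 1) : seminormAt r c (linearFactor c) = 0 :=
  seminormAt_eq_zero_of_evalAr_eq_zero hr0 hr1 hc0 hc1 (by rw [evalAr_linearFactor, sub_self])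

end LinearFactor

/-- The map `z ↦ |·|_z` from the closed disk `{|z| ≤ r}` to functions on `A_r` is
injective: if `z ≠ z′` are two points of the closed disk then there is some `f ∈ A_r` with
`|f|_z ≠ |f|_{z′}`. -/
theorem seminormAt_injective (r : ℝ) (hr0 : 0 < r) (hr1 : r < 1)
    (z z' : ℂ) (hz : ‖z‖ ≤ r) (hz' : ‖z'‖ ≤ r) (hne : z ≠ z') :
    ∃ f : LaurentSeries ℂ, memAr r f ∧ seminormAt r z f ≠ seminormAt r z' f := by
  wlog hz'0 : z' ≠ 0 generalizing z z'
  · obtain ⟨f, hf, hsep⟩ := this z' z hz' hz hne.symm (not_not.mp hz'0 ▸ hne)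
    exact ⟨f, hf, hsep.symm⟩
  refine ⟨linearFactor z', memAr_linearFactor r, ?_⟩
  rw [seminormAt_linearFactor_self hr0 hr1.ne hz'0 (hz'.trans_lt hr1).ne]
  exact (seminormAt_linearFactor_pos hr0 hne).ne'
end
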